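/- Miyasawa identity: let x ~ p on ℝⁿ, y = x + σn with n ~ N(0, I) independent, and let D(y) = E[x | y] be the MMSE denoiser. Then the posterior covariance satisfies Cov(x | y) = σ² J_D(y), where J_D(y) is the Jacobian of D at y. -/

import Mathlib

open MeasureTheory Real
open scoped RealInnerProductSpace

noncomputable section

/-- The Gaussian density `G_σ(u) = (2πσ²)^{-n/2} exp(-‖u‖²/(2σ²))` on `ℝⁿ`. -/
def gaussDensity (n : ℕ) (σ : ℝ) (u : EuclideanSpace ℝ (Fin n)) : ℝ :=
  (2 * Real.pi * σ ^ 2) ^ (-(n : ℝ) / 2) * Real.exp (-‖u‖ ^ 2 / (2 * σ ^ 2))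

lemma gauss_cont (n : ℕ) (σ : ℝ) : Continuous (gaussDensity n σ) := by
  unfold gaussDensity
  fun_prop

lemma abs_coord_le_norm {n : ℕ} (v : EuclideanSpace ℝ (Fin n)) (k : Fin n) : |v k| ≤ ‖v‖ := by
  rw [EuclideanSpace.norm_eq, ← Real.sqrt_sq_eq_abs]
  apply Real.sqrt_le_sqrt
  have : |v k| ^ 2 ≤ ∑ l, |v l| ^ 2 :=
    Finset.single_le_sum (f := fun l => |v l| ^ 2) (fun l _ => sq_nonneg _) (Finset.mem_univ k)
  simpa [sq_abs] using this

lemma norm_line_sq {n : ℕ} (a : EuclideanSpace ℝ (Fin n)) (j : Fin n) (s : ℝ) :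
    ‖a + s • EuclideanSpace.single j (1:ℝ)‖ ^ 2 = ‖a‖ ^ 2 + 2 * s * a j + s ^ 2 := by
  rw [norm_add_sq_real, real_inner_smul_right, EuclideanSpace.inner_single_right, norm_smul]
  simp [Real.norm_eq_abs, mul_pow, sq_abs]
  ring

lemma gauss_line_hasDerivAt {n : ℕ} {σ : ℝ} (hσ : 0 < σ) (a : EuclideanSpace ℝ (Fin n))
    (j : Fin n) (t : ℝ) :
    HasDerivAt (fun s : ℝ => gaussDensity n σ (a + s • EuclideanSpace.single j (1:ℝ)))
      (-((a j + t) / σ ^ 2) * gaussDensity n σ (a + t • EuclideanSpace.single j (1:ℝ))) t := by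
  have hσ2 : (σ:ℝ) ^ 2 ≠ 0 := by positivity
  have h1 : HasDerivAt (fun s : ℝ => ‖a‖ ^ 2 + 2 * s * a j + s ^ 2) (2 * a j + 2 * t) t := by
    have ha : HasDerivAt (fun s : ℝ => 2 * s * a j) (2 * a j) t := by
      simpa [mul_comm, mul_assoc, mul_left_comm] using (hasDerivAt_id t).const_mul (2 * a j)
    have hb : HasDerivAt (fun s : ℝ => s ^ 2) (2 * t) t := by
      simpa using hasDerivAt_pow 2 t
    exact (((hasDerivAt_const t (‖a‖ ^ 2)).add ha).add hb).congr_deriv (by ring)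
  have hq : HasDerivAt (fun s : ℝ => -(‖a‖ ^ 2 + 2 * s * a j + s ^ 2) / (2 * σ ^ 2))
      (-(2 * a j + 2 * t) / (2 * σ ^ 2)) t := (h1.neg).div_const _
  have hexp := (hq.exp).const_mul ((2 * Real.pi * σ ^ 2) ^ (-(n : ℝ) / 2))
  have hfun : (fun s : ℝ => (2 * Real.pi * σ ^ 2) ^ (-(n : ℝ) / 2) *
      Real.exp (-(‖a‖ ^ 2 + 2 * s * a j + s ^ 2) / (2 * σ ^ 2))) =
      fun s : ℝ => gaussDensity n σ (a + s • EuclideanSpace.single j (1:ℝ)) := by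
    funext s
    rw [gaussDensity, norm_line_sq]
  rw [hfun] at hexp
  convert hexp using 1
  · rfl
  · rfl
  rw [gaussDensity, norm_line_sq]
  field_simp

lemma exp_neg_le (q : ℝ) (hq : 0 ≤ q) : Real.exp (-q) ≤ 4 / (q ^ 2 + 1) := by
  rw [Real.exp_neg, inv_eq_one_div, div_le_div_iff₀ (Real.exp_pos q) (by positivity)]
  have h1 : q / 2 + 1 ≤ Real.exp (q / 2) := Real.add_one_le_exp _
  have h2 : Real.exp q = Real.exp (q / 2) * Real.exp (q / 2) := by
    rw [← Real.exp_add]; ring_nf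
  nlinarith [Real.exp_pos (q / 2), sq_nonneg q]

lemma exists_poly_gauss_bound (k A : ℝ) (hk : 0 < k) (hA : 0 ≤ A) :
    ∃ M : ℝ, ∀ r : ℝ, 0 ≤ r →
      (r + 1) * (r + A) * Real.exp (-(r ^ 2 - 2 * r) / k) ≤ M := by
  refine ⟨Real.exp (1 / k) * (3 * (2 + A) * (1 + 4 * k ^ 2)), fun r hr => ?_⟩
  have key : (r + 1) * (r + A) * Real.exp (-((r - 1) ^ 2) / k) ≤ 3 * (2 + A) * (1 + 4 * k ^ 2) := by
    rcases le_or_gt r 2 with h2 | h2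
    · have he : Real.exp (-((r - 1) ^ 2) / k) ≤ 1 := by
        rw [Real.exp_le_one_iff]
        have : 0 ≤ (r - 1) ^ 2 / k := by positivity
        linarith [neg_div k ((r-1)^2)]
      have hp : (r + 1) * (r + A) ≤ 3 * (2 + A) := by nlinarith
      have hgoal : (r + 1) * (r + A) * Real.exp (-((r - 1) ^ 2) / k) ≤ 3 * (2 + A) * 1 :=
        mul_le_mul hp he (Real.exp_pos _).le (by positivity)
      nlinarith [sq_nonneg k]
    · set q : ℝ := (r - 1) ^ 2 / k with hqdef
      have hq : (0:ℝ) ≤ q := by positivity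
      have hqk : q * k = (r - 1) ^ 2 := div_mul_cancel₀ _ hk.ne'
      have he : Real.exp (-((r - 1) ^ 2) / k) ≤ 4 / (q ^ 2 + 1) := by
        rw [neg_div]; exact exp_neg_le _ hq
      have hr1 : (1:ℝ) ≤ r - 1 := by linarith
      have hpos : (0:ℝ) < q ^ 2 + 1 := by positivity
      have hineq : (r + 1) * (r + A) * (4 / (q ^ 2 + 1)) ≤ 3 * (2 + A) * (1 + 4 * k ^ 2) := by
        rw [show (r + 1) * (r + A) * (4 / (q ^ 2 + 1)) = ((r + 1) * (r + A) * 4) / (q ^ 2 + 1)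
          by ring, div_le_iff₀ hpos]
        have h3 : r + 1 ≤ 3 * (r - 1) := by linarith
        have h4 : r + A ≤ (2 + A) * (r - 1) := by nlinarith
        have h5 : 4 * ((r + 1) * (r + A)) ≤ 12 * (2 + A) * (q * k) := by nlinarith
        nlinarith [sq_nonneg (2 * k * q - 1), sq_nonneg q, sq_nonneg k,
          mul_nonneg (mul_nonneg (by linarith : (0:ℝ) ≤ 2 + A) hq) hq,
          mul_nonneg (by linarith : (0:ℝ) ≤ 2 + A) (sq_nonneg k)]
      calc (r + 1) * (r + A) * Real.exp (-((r - 1) ^ 2) / k)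
          ≤ (r + 1) * (r + A) * (4 / (q ^ 2 + 1)) :=
            mul_le_mul_of_nonneg_left he (by nlinarith)
        _ ≤ 3 * (2 + A) * (1 + 4 * k ^ 2) := hineq
  have hrw : -(r ^ 2 - 2 * r) / k = 1 / k + -((r - 1) ^ 2) / k := by
    field_simp; ring
  have hmul := mul_le_mul_of_nonneg_left key (Real.exp_pos (1 / k)).le
  calc (r + 1) * (r + A) * Real.exp (-(r ^ 2 - 2 * r) / k)
      = Real.exp (1 / k) * ((r + 1) * (r + A) * Real.exp (-((r - 1) ^ 2) / k)) := by
        rw [hrw, Real.exp_add]; ring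
    _ ≤ _ := hmul

lemma deriv_under_integral {n : ℕ} {σ : ℝ} (hσ : 0 < σ)
    (p : EuclideanSpace ℝ (Fin n) → ℝ) (hp_nonneg : ∀ x, 0 ≤ p x)
    (hp_cont : Continuous p) (hp_int : Integrable p)
    (y : EuclideanSpace ℝ (Fin n)) (j : Fin n)
    (w : EuclideanSpace ℝ (Fin n) → ℝ) (hw_cont : Continuous w)
    (hw_bd : ∀ x, |w x| ≤ ‖x‖ + 1)
    (hF_int : Integrable (fun x => p x * gaussDensity n σ (y - x) * w x)) :
    HasDerivAt (fun t : ℝ =>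
        ∫ x, p x * gaussDensity n σ (y - x + t • EuclideanSpace.single j (1:ℝ)) * w x)
      (∫ x, p x * gaussDensity n σ (y - x) * (((x j - y j) / σ ^ 2) * w x)) 0 := by
  have hσ2 : (0:ℝ) < σ ^ 2 := by positivity
  set e : EuclideanSpace ℝ (Fin n) := EuclideanSpace.single j (1:ℝ) with he
  set c : ℝ := (2 * Real.pi * σ ^ 2) ^ (-(n : ℝ) / 2) with hc
  have hc_pos : 0 < c := Real.rpow_pos_of_pos (by positivity) _
  obtain ⟨M, hM⟩ := exists_poly_gauss_bound (2 * σ ^ 2) (‖y‖ + 1) (by positivity) (by positivity)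
  set F' : ℝ → EuclideanSpace ℝ (Fin n) → ℝ := fun t x =>
    p x * (-(((y - x) j + t) / σ ^ 2) * gaussDensity n σ (y - x + t • e)) * w x with hF'
  have hcont : ∀ t : ℝ, Continuous fun x : EuclideanSpace ℝ (Fin n) =>
      gaussDensity n σ (y - x + t • e) :=
    fun t => (gauss_cont n σ).comp ((continuous_const.sub continuous_id).add continuous_const)
  have hmeas : ∀ t : ℝ, AEStronglyMeasurable
      (fun x => p x * gaussDensity n σ (y - x + t • e) * w x)
      (volume : Measure (EuclideanSpace ℝ (Fin n))) :=
    fun t => (((hp_cont.mul (hcont t)).mul hw_cont)).aestronglyMeasurable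
  have hF'meas : AEStronglyMeasurable (F' 0) (volume : Measure (EuclideanSpace ℝ (Fin n))) := by
    apply Continuous.aestronglyMeasurable
    apply Continuous.mul _ hw_cont
    apply hp_cont.mul
    apply Continuous.mul _ (hcont 0)
    fun_prop
  have hgauss_nonneg : ∀ u : EuclideanSpace ℝ (Fin n), 0 ≤ gaussDensity n σ u := fun u =>
    mul_nonneg hc_pos.le (Real.exp_pos _).le
  have h_bound : ∀ᵐ x : EuclideanSpace ℝ (Fin n), ∀ t ∈ Metric.ball (0:ℝ) 1,
      ‖F' t x‖ ≤ (c / σ ^ 2 * M) * p x := by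
    apply Filter.Eventually.of_forall
    intro x t ht
    have ht1 : |t| ≤ 1 := by
      rw [Metric.mem_ball, Real.dist_eq, sub_zero] at ht
      exact ht.le
    set r : ℝ := ‖y - x‖ with hr
    have hr0 : 0 ≤ r := norm_nonneg _
    have haj : |(y - x) j| ≤ r := abs_coord_le_norm _ _
    have h1 : |(y - x) j + t| ≤ r + 1 := (abs_add_le _ _).trans (by linarith)
    have h2 : gaussDensity n σ (y - x + t • e) ≤ c * Real.exp (-(r ^ 2 - 2 * r) / (2 * σ ^ 2)) := by
      rw [gaussDensity, ← hc]
      apply mul_le_mul_of_nonneg_left _ hc_pos.le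
      apply Real.exp_le_exp.2
      rw [div_le_div_iff₀ (by positivity) (by positivity)]
      have hexp := norm_line_sq (y - x) j t
      have habs : t * (y - x) j ≥ -r := by nlinarith [abs_le.1 haj, abs_le.1 ht1, neg_abs_le (t * (y-x) j), abs_mul t ((y-x) j)]
      nlinarith [sq_nonneg t]
    have h3 : |w x| ≤ r + (‖y‖ + 1) := by
      have : ‖x‖ ≤ ‖y‖ + r := by
        have := norm_sub_le y (y - x)
        simpa using this
      linarith [hw_bd x]
    have key : |(y - x) j + t| / σ ^ 2 * gaussDensity n σ (y - x + t • e) * |w x|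
        ≤ c / σ ^ 2 * M := by
      calc |(y - x) j + t| / σ ^ 2 * gaussDensity n σ (y - x + t • e) * |w x|
          ≤ (r + 1) / σ ^ 2 * (c * Real.exp (-(r ^ 2 - 2 * r) / (2 * σ ^ 2))) * (r + (‖y‖ + 1)) := by
            gcongr
            exact hgauss_nonneg _
        _ = c / σ ^ 2 * ((r + 1) * (r + (‖y‖ + 1)) * Real.exp (-(r ^ 2 - 2 * r) / (2 * σ ^ 2))) := by
            ring
        _ ≤ c / σ ^ 2 * M := by
            exact mul_le_mul_of_nonneg_left (hM r hr0) (by positivity)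
    have hnorm : ‖F' t x‖ = p x * (|(y - x) j + t| / σ ^ 2
        * gaussDensity n σ (y - x + t • e) * |w x|) := by
      rw [hF']
      simp only [Real.norm_eq_abs, abs_mul]
      rw [abs_of_nonneg (hp_nonneg x), abs_neg, abs_div, abs_of_nonneg hσ2.le,
        abs_of_nonneg (hgauss_nonneg _)]
      ring
    rw [hnorm]
    calc p x * (|(y - x) j + t| / σ ^ 2 * gaussDensity n σ (y - x + t • e) * |w x|)
        ≤ p x * (c / σ ^ 2 * M) := mul_le_mul_of_nonneg_left key (hp_nonneg x)
      _ = (c / σ ^ 2 * M) * p x := by ring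
  have h_diff : ∀ᵐ x : EuclideanSpace ℝ (Fin n), ∀ t ∈ Metric.ball (0:ℝ) 1,
      HasDerivAt (fun s => p x * gaussDensity n σ (y - x + s • e) * w x) (F' t x) t := by
    apply Filter.Eventually.of_forall
    intro x t _
    exact ((gauss_line_hasDerivAt hσ (y - x) j t).const_mul (p x)).mul_const (w x)
  have main := hasDerivAt_integral_of_dominated_loc_of_deriv_le (μ := volume)
    (F := fun t x => p x * gaussDensity n σ (y - x + t • e) * w x) (F' := F')
    (x₀ := (0:ℝ)) (bound := fun x => (c / σ ^ 2 * M) * p x) (Metric.ball_mem_nhds 0 one_pos)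
    (Filter.Eventually.of_forall hmeas) (by simpa using hF_int) hF'meas h_bound
    (hp_int.const_mul _) h_diff
  have hres := main.2
  have hfun : (∫ x, F' 0 x) = ∫ x, p x * gaussDensity n σ (y - x) * (((x j - y j) / σ ^ 2) * w x) := by
    congr 1
    funext x
    rw [hF']
    simp only [zero_smul, add_zero, add_zero]
    rw [PiLp.sub_apply]
    ring
  rw [hfun] at hres
  exact hres

/-- **Miyasawa identity**: for `x ~ p`, `y = x + σn` with `n ~ N(0, I)`, the MMSE
denoiser `D(y) = E[x | y]` (written as the ratio of integrals against the joint density)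
and the posterior covariance `Cov(x | y)` satisfy `Cov(x | y) = σ² J_D(y)`, entrywise:
`Cov(x|y)_{ij} = σ² (∂ D_i / ∂ y_j)(y)`. -/
theorem miyasawa_identity
    (n : ℕ) (σ : ℝ) (hσ : 0 < σ)
    (p : EuclideanSpace ℝ (Fin n) → ℝ)
    (hp_nonneg : ∀ x, 0 ≤ p x)
    (hp_prob : ∫ x, p x = 1)
    (hp_smooth : ContDiff ℝ (⊤ : ℕ∞) p)
    (pσ : EuclideanSpace ℝ (Fin n) → ℝ)
    (hpσ : ∀ z, pσ z = ∫ x, p x * gaussDensity n σ (z - x))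
    (hpσ_pos : ∀ z, 0 < pσ z)
    (hpσ_smooth : ContDiff ℝ 2 pσ)
    (D : EuclideanSpace ℝ (Fin n) → EuclideanSpace ℝ (Fin n))
    (hD : ∀ z, D z = (pσ z)⁻¹ • (∫ x, (p x * gaussDensity n σ (z - x)) • x))
    (hD_diff : Differentiable ℝ D)
    (hint1 : ∀ z, Integrable (fun x => (p x * gaussDensity n σ (z - x)) • x))
    (hint2 : ∀ z i j, Integrable (fun x =>
      p x * gaussDensity n σ (z - x) * ((x i - D z i) * (x j - D z j))))
    (y : EuclideanSpace ℝ (Fin n)) (i j : Fin n) :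
    (pσ y)⁻¹ * ∫ x, p x * gaussDensity n σ (y - x) * ((x i - D y i) * (x j - D y j)) =
      σ ^ 2 * (fderiv ℝ D y (EuclideanSpace.single j 1) i) := by
  have hσ2 : (0:ℝ) < σ ^ 2 := by positivity
  set e : EuclideanSpace ℝ (Fin n) := EuclideanSpace.single j (1:ℝ) with he
  have hp_int : Integrable p := Integrable.of_integral_ne_zero (by rw [hp_prob]; norm_num)
  have hρ_int : ∀ z, Integrable (fun x => p x * gaussDensity n σ (z - x)) := fun z =>
    Integrable.of_integral_ne_zero (by rw [← hpσ z]; exact (hpσ_pos z).ne')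
  have hρi_int : ∀ z (k : Fin n),
      Integrable (fun x => p x * gaussDensity n σ (z - x) * x k) := by
    intro z k
    have := (EuclideanSpace.proj k : EuclideanSpace ℝ (Fin n) →L[ℝ] ℝ).integrable_comp (hint1 z)
    simpa [PiLp.proj_apply, PiLp.smul_apply, smul_eq_mul] using this
  have hVk : ∀ z (k : Fin n), (∫ x, (p x * gaussDensity n σ (z - x)) • x) k
      = ∫ x, p x * gaussDensity n σ (z - x) * x k := by
    intro z k
    have hcomm := (ContinuousLinearMap.integral_comp_comm
      (EuclideanSpace.proj k : EuclideanSpace ℝ (Fin n) →L[ℝ] ℝ) (hint1 z)).symm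
    simpa [PiLp.proj_apply, PiLp.smul_apply, smul_eq_mul] using hcomm
  have hDk' : ∀ z (k : Fin n), D z k
      = (pσ z)⁻¹ * ∫ x, p x * gaussDensity n σ (z - x) * x k := by
    intro z k
    rw [hD z]
    simp only [PiLp.smul_apply, smul_eq_mul]
    rw [hVk]
  have hDk : ∀ z (k : Fin n), pσ z * D z k
      = ∫ x, p x * gaussDensity n σ (z - x) * x k := by
    intro z k
    rw [hDk' z k, ← mul_assoc, mul_inv_cancel₀ (hpσ_pos z).ne', one_mul]
  set S : ℝ := ∫ x, p x * gaussDensity n σ (y - x) * (x i * x j) with hS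
  have hSij_int : Integrable (fun x => p x * gaussDensity n σ (y - x) * (x i * x j)) := by
    have comb := (((hint2 y i j).add ((hρi_int y j).const_mul (D y i))).add
        ((hρi_int y i).const_mul (D y j))).sub ((hρ_int y).const_mul (D y i * D y j))
    have hfe : (fun x => p x * gaussDensity n σ (y - x) * (x i * x j))
        = fun x => (p x * gaussDensity n σ (y - x) * ((x i - D y i) * (x j - D y j))
            + D y i * (p x * gaussDensity n σ (y - x) * x j)
            + D y j * (p x * gaussDensity n σ (y - x) * x i))
            - D y i * D y j * (p x * gaussDensity n σ (y - x)) := funext fun x => by ring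
    rw [hfe]
    exact comb
  -- value of the covariance integral
  have hC : (∫ x, p x * gaussDensity n σ (y - x) * ((x i - D y i) * (x j - D y j)))
      = S - pσ y * (D y i * D y j) := by
    have e1 : ∀ x : EuclideanSpace ℝ (Fin n),
        p x * gaussDensity n σ (y - x) * ((x i - D y i) * (x j - D y j))
        = p x * gaussDensity n σ (y - x) * (x i * x j)
          - D y i * (p x * gaussDensity n σ (y - x) * x j)
          - D y j * (p x * gaussDensity n σ (y - x) * x i)
          + D y i * D y j * (p x * gaussDensity n σ (y - x)) := fun x => by ring
    simp only [e1]
    have iA := hSij_int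
    have iB : Integrable (fun x => D y i * (p x * gaussDensity n σ (y - x) * x j)) :=
      (hρi_int y j).const_mul (D y i)
    have iC : Integrable (fun x => D y j * (p x * gaussDensity n σ (y - x) * x i)) :=
      (hρi_int y i).const_mul (D y j)
    have iD : Integrable (fun x => D y i * D y j * (p x * gaussDensity n σ (y - x))) :=
      (hρ_int y).const_mul (D y i * D y j)
    have iAB : Integrable (fun x => p x * gaussDensity n σ (y - x) * (x i * x j)
        - D y i * (p x * gaussDensity n σ (y - x) * x j)) := iA.sub iB
    have iABC : Integrable (fun x => p x * gaussDensity n σ (y - x) * (x i * x j)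
        - D y i * (p x * gaussDensity n σ (y - x) * x j)
        - D y j * (p x * gaussDensity n σ (y - x) * x i)) := iAB.sub iC
    rw [integral_add iABC iD, integral_sub iAB iC, integral_sub iA iB,
        integral_const_mul, integral_const_mul, integral_const_mul,
        ← hDk y i, ← hDk y j, ← hpσ y, ← hS]
    ring
  -- derivative of pσ along the line
  have habs1 : ∀ x : EuclideanSpace ℝ (Fin n), |(1:ℝ)| ≤ ‖x‖ + 1 := fun x => by
    rw [abs_one]; linarith [norm_nonneg x]
  have hg0 : HasDerivAt (fun t : ℝ =>
        ∫ x, p x * gaussDensity n σ (y - x + t • e) * (1:ℝ))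
      (∫ x, p x * gaussDensity n σ (y - x) * (((x j - y j) / σ ^ 2) * 1)) 0 :=
    deriv_under_integral hσ p hp_nonneg hp_smooth.continuous hp_int y j (fun _ => 1)
      continuous_const habs1 (by simpa using hρ_int y)
  set G' : ℝ := ∫ x, p x * gaussDensity n σ (y - x) * (((x j - y j) / σ ^ 2) * 1) with hG'def
  have hgfun : (fun t : ℝ => ∫ x, p x * gaussDensity n σ (y - x + t • e) * (1:ℝ))
      = fun t : ℝ => pσ (y + t • e) := by
    funext t
    rw [hpσ (y + t • e)]
    congr 1
    funext x
    rw [mul_one, add_sub_right_comm]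
  rw [hgfun] at hg0
  -- derivative of the numerator along the line
  have habs2 : ∀ x : EuclideanSpace ℝ (Fin n), |x i| ≤ ‖x‖ + 1 := fun x => by
    linarith [abs_coord_le_norm x i]
  have hf0 : HasDerivAt (fun t : ℝ =>
        ∫ x, p x * gaussDensity n σ (y - x + t • e) * x i)
      (∫ x, p x * gaussDensity n σ (y - x) * (((x j - y j) / σ ^ 2) * x i)) 0 :=
    deriv_under_integral hσ p hp_nonneg hp_smooth.continuous hp_int y j (fun x => x i)
      (EuclideanSpace.proj i : EuclideanSpace ℝ (Fin n) →L[ℝ] ℝ).continuous habs2 (hρi_int y i)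
  set F' : ℝ := ∫ x, p x * gaussDensity n σ (y - x) * (((x j - y j) / σ ^ 2) * x i) with hF'def
  have hffun : (fun t : ℝ => ∫ x, p x * gaussDensity n σ (y - x + t • e) * x i)
      = fun t : ℝ => ∫ x, p x * gaussDensity n σ (y + t • e - x) * x i := by
    funext t
    congr 1
    funext x
    rw [add_sub_right_comm]
  rw [hffun] at hf0
  -- derivative of D along the line, two ways
  have hline : HasDerivAt (fun t : ℝ => y + t • e) e 0 := by
    have h1 : HasDerivAt (fun t : ℝ => t • e) ((1:ℝ) • e) 0 := (hasDerivAt_id (0:ℝ)).smul_const e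
    simpa using h1.const_add y
  have hDline : HasDerivAt (fun t : ℝ => D (y + t • e)) (fderiv ℝ D y e) 0 := by
    have h0 : HasFDerivAt D (fderiv ℝ D y) (y + (0:ℝ) • e) := by
      simpa using (hD_diff y).hasFDerivAt
    exact h0.comp_hasDerivAt 0 hline
  have hφ1 : HasDerivAt (fun t : ℝ => D (y + t • e) i) (fderiv ℝ D y e i) 0 := by
    have hp' := ((EuclideanSpace.proj i :
      EuclideanSpace ℝ (Fin n) →L[ℝ] ℝ)).hasFDerivAt.comp_hasDerivAt 0 hDline
    simpa [PiLp.proj_apply, Function.comp_def] using hp'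
  have hφeq : (fun t : ℝ => D (y + t • e) i)
      = fun t : ℝ => (∫ x, p x * gaussDensity n σ (y + t • e - x) * x i) / pσ (y + t • e) :=
    funext fun t => by rw [hDk' (y + t • e) i, div_eq_inv_mul]
  have hφ2 : HasDerivAt (fun t : ℝ => D (y + t • e) i)
      ((F' * pσ (y + (0:ℝ) • e) - (∫ x, p x * gaussDensity n σ (y + (0:ℝ) • e - x) * x i) * G')
        / pσ (y + (0:ℝ) • e) ^ 2) 0 := by
    rw [hφeq]
    exact hf0.div hg0 (hpσ_pos _).ne'
  have hz : y + (0:ℝ) • e = y := by simp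
  rw [hz] at hφ2
  rw [← hDk y i] at hφ2
  have hun : fderiv ℝ D y e i = (F' * pσ y - pσ y * D y i * G') / pσ y ^ 2 :=
    hφ1.unique hφ2
  -- compute σ² G' and σ² F'
  have hG'val : σ ^ 2 * G' = pσ y * D y j - y j * pσ y := by
    rw [hG'def, ← integral_const_mul]
    have e2 : ∀ x : EuclideanSpace ℝ (Fin n),
        σ ^ 2 * (p x * gaussDensity n σ (y - x) * (((x j - y j) / σ ^ 2) * 1))
        = p x * gaussDensity n σ (y - x) * x j - y j * (p x * gaussDensity n σ (y - x)) :=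
      fun x => by field_simp
    simp only [e2]
    rw [integral_sub (hρi_int y j) ((hρ_int y).const_mul _), integral_const_mul,
      ← hDk y j, ← hpσ y]
  have hF'val : σ ^ 2 * F' = S - y j * (pσ y * D y i) := by
    rw [hF'def, ← integral_const_mul]
    have e3 : ∀ x : EuclideanSpace ℝ (Fin n),
        σ ^ 2 * (p x * gaussDensity n σ (y - x) * (((x j - y j) / σ ^ 2) * x i))
        = p x * gaussDensity n σ (y - x) * (x i * x j)
          - y j * (p x * gaussDensity n σ (y - x) * x i) :=
      fun x => by field_simp
    simp only [e3]
    rw [integral_sub hSij_int ((hρi_int y i).const_mul _), integral_const_mul,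
      ← hDk y i, ← hS]
  -- finish
  rw [hC, hun]
  have hP := (hpσ_pos y).ne'
  field_simp
  linear_combination (-1) * hF'val + (D y i) * hG'val
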